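/- Let R_1,...,R_n, R_{n+1} be exchangeable and almost surely pairwise distinct, and define p = (1 + #{i ≤ n : R_{n+1} < R_i})/(n+1). Then for every α ∈ [0,1], P(p ≤ α) = ⌊α(n+1)⌋/(n+1). In particular P(p ≤ α) ≥ α − 1/(n+1). -/

import Mathlib

open MeasureTheory Finset
open scoped ENNReal

/-! The p-value is `(1 + N) / (n + 1)`, where `N` counts the scores strictly above the test
score. For a vector with distinct entries, `j ↦ #{i | x j < x i}` is a bijection onto
`{0, …, n}`, so for each `k ≤ n` the events "exactly `k` coordinates exceed coordinate `j`"
(`j` varying) cover almost every vector exactly once. Exchangeability makes them equally likely,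
so each has probability `1 / (n + 1)`, and `p ≤ α` is the union of the events `N = k` for
`k < ⌊α (n + 1)⌋`. -/

section Combinatorics

variable {ι α : Type*} [Fintype ι] [LinearOrder α]

def numAbove (x : ι → α) (j : ι) : ℕ := #{i | x j < x i}

lemma numAbove_lt_card (x : ι → α) (j : ι) : numAbove x j < Fintype.card ι :=
  card_lt_card <| filter_ssubset.2 ⟨j, mem_univ j, lt_irrefl _⟩

lemma numAbove_lt_numAbove {x : ι → α} {j j' : ι} (h : x j < x j') :
    numAbove x j' < numAbove x j := by
  refine card_lt_card <| (ssubset_iff_of_subset fun i hi => ?_).2 ⟨j', ?_, ?_⟩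
  · simp only [mem_filter, mem_univ, true_and] at hi ⊢
    exact h.trans hi
  · simpa using h
  · simp

lemma numAbove_injective {x : ι → α} (hx : Function.Injective x) :
    Function.Injective (numAbove x) := by
  intro j j' h
  by_contra hne
  rcases (hx.ne hne).lt_or_gt with hlt | hlt
  · exact (numAbove_lt_numAbove hlt).ne' h
  · exact (numAbove_lt_numAbove hlt).ne h

lemma card_numAbove_eq_one {x : ι → α} (hx : Function.Injective x) {k : ℕ}
    (hk : k < Fintype.card ι) : #{j | numAbove x j = k} = 1 := by
  let f : ι → Fin (Fintype.card ι) := fun j => ⟨numAbove x j, numAbove_lt_card x j⟩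
  have hf : Function.Bijective f := (Fintype.bijective_iff_injective_and_card f).2
    ⟨fun j j' h => numAbove_injective hx (Fin.ext_iff.1 h), by simp⟩
  obtain ⟨j, hj, hunique⟩ := hf.existsUnique ⟨k, hk⟩
  refine card_eq_one.2 ⟨j, eq_singleton_iff_unique_mem.2 ⟨by simpa [f, Fin.ext_iff] using hj, ?_⟩⟩
  intro j' hj'
  exact hunique j' (Fin.ext (by simpa using hj'))

lemma numAbove_comp_perm (x : ι → α) (σ : Equiv.Perm ι) (j : ι) :
    numAbove (x ∘ σ) j = numAbove x (σ j) := by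
  simp only [numAbove, card_filter, Function.comp_apply]
  exact Equiv.sum_comp σ fun i => if x (σ j) < x i then 1 else 0

lemma numAbove_last {n : ℕ} (x : Fin (n + 1) → α) :
    numAbove x (Fin.last n) = #{i : Fin n | x (Fin.last n) < x i.castSucc} := by
  simp only [numAbove, card_filter, Fin.sum_univ_castSucc, lt_irrefl, if_false, add_zero]

end Combinatorics

section Probability

variable {ι α : Type*} [LinearOrder α] [TopologicalSpace α] [MeasurableSpace α]
  [OpensMeasurableSpace α] [SecondCountableTopology α] [OrderClosedTopology α]

lemma measurableSet_apply_lt_apply (i j : ι) : MeasurableSet {x : ι → α | x i < x j} :=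
  measurableSet_lt (measurable_pi_apply i) (measurable_pi_apply j)

variable [Fintype ι]

lemma measurable_numAbove (j : ι) : Measurable fun x : ι → α => numAbove x j := by
  simp only [numAbove, card_filter]
  exact Finset.measurable_sum _ fun i _ =>
    Measurable.ite (measurableSet_apply_lt_apply j i) measurable_const measurable_const

lemma measurableSet_numAbove_eq (j : ι) (k : ℕ) : MeasurableSet {x : ι → α | numAbove x j = k} :=
  measurable_numAbove j (measurableSet_singleton k)

lemma measurableSet_numAbove_lt (j : ι) (m : ℕ) : MeasurableSet {x : ι → α | numAbove x j < m} :=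
  measurable_numAbove j measurableSet_Iio

lemma measurableSet_setOf_injective : MeasurableSet {x : ι → α | Function.Injective x} := by
  simp only [Function.Injective, ← not_imp_not (a := _ = _), ← ne_eq, ne_iff_lt_or_gt]
  refine Measurable.setOf <| Measurable.forall fun i => Measurable.forall fun j => ?_
  exact measurable_const.imp
    ((measurableSet_apply_lt_apply (α := α) i j).mem.or (measurableSet_apply_lt_apply j i).mem)

variable {ν : Measure (ι → α)}

lemma measure_numAbove_eq_of_perm_invariant
    (hperm : ∀ σ : Equiv.Perm ι, ν.map (fun x => x ∘ σ) = ν) (j j' : ι) (k : ℕ) :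
    ν {x | numAbove x j = k} = ν {x | numAbove x j' = k} := by
  classical
  let σ := Equiv.swap j j'
  have hσ : Measurable fun x : ι → α => x ∘ σ := by fun_prop
  calc ν {x | numAbove x j = k} = ν.map (fun x => x ∘ σ) {x | numAbove x j' = k} := by
        rw [Measure.map_apply hσ (measurableSet_numAbove_eq j' k)]
        congr 1
        ext x
        simp [numAbove_comp_perm, σ]
    _ = ν {x | numAbove x j' = k} := by rw [hperm σ]

lemma sum_measure_numAbove_eq_one [IsProbabilityMeasure ν]
    (hinj : ∀ᵐ x ∂ν, Function.Injective x) {k : ℕ} (hk : k < Fintype.card ι) :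
    ∑ j, ν {x | numAbove x j = k} = 1 := by
  have hS (j : ι) := measurableSet_numAbove_eq (α := α) j k
  calc ∑ j, ν {x | numAbove x j = k}
      = ∫⁻ x, ∑ j, {x : ι → α | numAbove x j = k}.indicator 1 x ∂ν := by
        rw [lintegral_finsetSum' _ fun j _ => (measurable_one.indicator (hS j)).aemeasurable]
        simp only [lintegral_indicator_one (hS _)]
    _ = ∫⁻ _, 1 ∂ν := by
        refine lintegral_congr_ae (hinj.mono fun x hx => ?_)
        simp only [Set.indicator_apply, Set.mem_ofPred_eq, Pi.one_apply, sum_boole,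
          card_numAbove_eq_one hx hk, Nat.cast_one]
    _ = 1 := by simp

lemma measure_numAbove_eq_inv_card [IsProbabilityMeasure ν]
    (hperm : ∀ σ : Equiv.Perm ι, ν.map (fun x => x ∘ σ) = ν)
    (hinj : ∀ᵐ x ∂ν, Function.Injective x) (j : ι) {k : ℕ} (hk : k < Fintype.card ι) :
    ν {x | numAbove x j = k} = (Fintype.card ι : ℝ≥0∞)⁻¹ := by
  have hsum := sum_measure_numAbove_eq_one hinj hk
  simp only [measure_numAbove_eq_of_perm_invariant hperm _ j k, sum_const, card_univ,
    nsmul_eq_mul] at hsum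
  exact ENNReal.eq_inv_of_mul_eq_one_left (by rwa [mul_comm])

lemma measure_numAbove_lt [IsProbabilityMeasure ν]
    (hperm : ∀ σ : Equiv.Perm ι, ν.map (fun x => x ∘ σ) = ν)
    (hinj : ∀ᵐ x ∂ν, Function.Injective x) (j : ι) {m : ℕ} (hm : m ≤ Fintype.card ι) :
    ν {x | numAbove x j < m} = m / Fintype.card ι := by
  have hunion : {x : ι → α | numAbove x j < m} = ⋃ k ∈ range m, {x | numAbove x j = k} := by
    ext x
    simp
  have hdisj : (range m : Set ℕ).PairwiseDisjoint fun k => {x : ι → α | numAbove x j = k} :=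
    fun k _ k' _ hkk' => Set.disjoint_left.2 fun x hk hk' => hkk' (hk.symm.trans hk')
  rw [hunion, measure_biUnion_finset hdisj fun k _ => measurableSet_numAbove_eq j k,
    sum_congr rfl fun k hk => measure_numAbove_eq_inv_card hperm hinj j
      ((mem_range.1 hk).trans_le hm), sum_const, card_range, nsmul_eq_mul, div_eq_mul_inv]

end Probability

lemma add_one_div_le_iff_lt_floor {a c : ℝ} (hc : 0 < c) (k : ℕ) :
    (k + 1 : ℝ) / c ≤ a ↔ k < ⌊a * c⌋₊ := by
  rw [div_le_iff₀ hc, ← Nat.cast_add_one, ← Nat.le_floor_iff' k.succ_ne_zero, Nat.add_one_le_iff]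

lemma ENNReal.ofReal_intCast_floor (a : ℝ) : ENNReal.ofReal ⌊a⌋ = ⌊a⌋₊ := by
  rcases le_or_gt 0 a with ha | ha
  · rw [← natCast_floor_eq_intCast_floor ha, ENNReal.ofReal_natCast]
  · rw [ENNReal.ofReal_of_nonpos (Int.cast_nonpos.2 (Int.floor_nonpos ha.le)),
      Nat.floor_of_nonpos ha.le, Nat.cast_zero]

theorem conformal_p_value_exact_distribution_general
    {Ω : Type*} [MeasurableSpace Ω] (μ : Measure Ω) [IsProbabilityMeasure μ]
    (n : ℕ) (R : Fin (n + 1) → Ω → ℝ)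
    (hmeas : ∀ i, Measurable (R i))
    (hexch : ∀ σ : Equiv.Perm (Fin (n + 1)),
      Measure.map (fun ω => fun i => R (σ i) ω) μ
        = Measure.map (fun ω => fun i => R i ω) μ)
    (hdistinct : μ {ω | ∃ i j : Fin (n + 1), i ≠ j ∧ R i ω = R j ω} = 0)
    (p : Ω → ℝ)
    (hp : ∀ ω, p ω =
      (1 + (Finset.univ.filter
        (fun i : Fin n => R (Fin.last n) ω < R i.castSucc ω)).card : ℝ) / (n + 1))
    (α : ℝ) (hα1 : α ≤ 1) :
    μ {ω | p ω ≤ α} = ENNReal.ofReal ((⌊α * (n + 1)⌋ : ℝ) / (n + 1)) ∧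
      ENNReal.ofReal (α - 1 / (n + 1)) ≤ μ {ω | p ω ≤ α} := by
  set X : Ω → Fin (n + 1) → ℝ := fun ω i => R i ω
  have hX : Measurable X := measurable_pi_lambda _ hmeas
  have : IsProbabilityMeasure (μ.map X) := Measure.isProbabilityMeasure_map hX.aemeasurable
  have hperm (σ : Equiv.Perm (Fin (n + 1))) : (μ.map X).map (fun x => x ∘ σ) = μ.map X := by
    rw [Measure.map_map (by fun_prop) hX]
    exact hexch σ
  have hinj : ∀ᵐ x ∂μ.map X, Function.Injective x := by
    rw [ae_map_iff hX.aemeasurable measurableSet_setOf_injective, ae_iff]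
    simpa only [Function.not_injective_iff, X, and_comm] using hdistinct
  have hpos : (0 : ℝ) < n + 1 := n.cast_add_one_pos
  have hevent : {ω | p ω ≤ α} = X ⁻¹' {x | numAbove x (Fin.last n) < ⌊α * (n + 1)⌋₊} := by
    ext ω
    simp only [Set.mem_ofPred_eq, Set.mem_preimage, hp, add_comm (1 : ℝ), numAbove_last, X,
      add_one_div_le_iff_lt_floor hpos]
  have hm : ⌊α * (n + 1)⌋₊ ≤ Fintype.card (Fin (n + 1)) :=
    (Nat.floor_le_of_le (by push_cast; exact mul_le_of_le_one_left hpos.le hα1)).trans_eq (Fintype.card_fin _).symm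
  have hprob : μ {ω | p ω ≤ α} = ENNReal.ofReal ((⌊α * (n + 1)⌋ : ℝ) / (n + 1)) := by
    rw [hevent, ← Measure.map_apply hX (measurableSet_numAbove_lt _ _),
      measure_numAbove_lt hperm hinj _ hm, ENNReal.ofReal_div_of_pos hpos,
      ENNReal.ofReal_intCast_floor, Fintype.card_fin, ← Nat.cast_add_one, ENNReal.ofReal_natCast]
  refine ⟨hprob, hprob ▸ ENNReal.ofReal_le_ofReal ?_⟩
  calc α - 1 / (n + 1) = (α * (n + 1) - 1) / (n + 1) := by field_simp
    _ ≤ ⌊α * (n + 1)⌋ / (n + 1) := by gcongr; exact (Int.sub_one_lt_floor _).le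

/-- **Exact distribution of the conformal p-value.** Let `R 0, ..., R n` (last index the
test point) be exchangeable and almost surely pairwise distinct, and let
`p ω = (1 + #{i < n : R (last) ω < R i ω})/(n+1)`.  Then for every `α ∈ [0,1]`,
`P(p ≤ α) = ⌊α(n+1)⌋/(n+1)`; in particular `P(p ≤ α) ≥ α − 1/(n+1)`. -/
theorem conformal_p_value_exact_distribution
    {Ω : Type*} [MeasurableSpace Ω] (μ : Measure Ω) [IsProbabilityMeasure μ]
    (n : ℕ) (R : Fin (n + 1) → Ω → ℝ)
    (hmeas : ∀ i, Measurable (R i))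
    (hexch : ∀ σ : Equiv.Perm (Fin (n + 1)),
      Measure.map (fun ω => fun i => R (σ i) ω) μ
        = Measure.map (fun ω => fun i => R i ω) μ)
    (hdistinct : μ {ω | ∃ i j : Fin (n + 1), i ≠ j ∧ R i ω = R j ω} = 0)
    (p : Ω → ℝ)
    (hp : ∀ ω, p ω =
      (1 + (Finset.univ.filter
        (fun i : Fin n => R (Fin.last n) ω < R i.castSucc ω)).card : ℝ) / (n + 1))
    (α : ℝ) (hα0 : 0 ≤ α) (hα1 : α ≤ 1) :
    μ {ω | p ω ≤ α} = ENNReal.ofReal ((⌊α * (n + 1)⌋ : ℝ) / (n + 1)) ∧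
      ENNReal.ofReal (α - 1 / (n + 1)) ≤ μ {ω | p ω ≤ α} :=
  conformal_p_value_exact_distribution_general μ n R hmeas hexch hdistinct p hp α hα1
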